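/- arXiv:2305.06526 — 3 statements merged into one kernel-verified Lean document; each statement's English description precedes it below -/
import Mathlib

section
/- Let q ∈ [0,1] and let m be a positive integer with m·q ≤ 1. Then the function g(x) = (1 - q(1-q)^x)^m is concave on the interval [0, ∞) (as a function of a real variable x). -/
theorem stmt_1 (q : ℝ) (m : ℕ) (hq : q ∈ Set.Ioo (0:ℝ) 1) (hm : 1 ≤ m)
    (hmq : (m : ℝ) * q ≤ 1) :
    ConcaveOn ℝ (Set.Ici (0:ℝ)) (fun x : ℝ => (1 - q * (1 - q) ^ x) ^ m) := by
  obtain ⟨hq0, hq1⟩ := hq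
  set r : ℝ := 1 - q with hrdef
  have hr0 : 0 < r := by simp [hrdef]; linarith
  have hr1 : r ≤ 1 := by simp [hrdef]; linarith
  set L : ℝ := Real.log r with hLdef
  have h1 : ∀ x : ℝ, HasDerivAt (fun x : ℝ => r ^ x) (r ^ x * L) x := fun x =>
    (Real.hasStrictDerivAt_const_rpow hr0 x).hasDerivAt
  have h2 : ∀ x : ℝ, HasDerivAt (fun x : ℝ => 1 - q * r ^ x) (-(q * (r ^ x * L))) x := by
    intro x
    simpa using ((h1 x).const_mul q).const_sub 1
  -- first derivative of g
  have hg' : ∀ x : ℝ, HasDerivAt (fun x : ℝ => (1 - q * r ^ x) ^ m)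
      ((m : ℝ) * (1 - q * r ^ x) ^ (m - 1) * (-(q * (r ^ x * L)))) x := fun x =>
    (h2 x).pow m
  -- derivative of the first derivative
  have hg'' : ∀ x : ℝ, HasDerivAt
      (fun x : ℝ => (m : ℝ) * (1 - q * r ^ x) ^ (m - 1) * (-(q * (r ^ x * L))))
      ((m : ℝ) * ((((m - 1 : ℕ) : ℝ) * (1 - q * r ^ x) ^ (m - 1 - 1) * (-(q * (r ^ x * L))))
          * (-(q * (r ^ x * L))) + (1 - q * r ^ x) ^ (m - 1) * (-(q * (r ^ x * L * L))))) x := by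
    intro x
    have hv : HasDerivAt (fun x : ℝ => (1 - q * r ^ x) ^ (m - 1))
        (((m - 1 : ℕ) : ℝ) * (1 - q * r ^ x) ^ (m - 1 - 1) * (-(q * (r ^ x * L)))) x :=
      (h2 x).pow (m - 1)
    have hw : HasDerivAt (fun x : ℝ => -(q * (r ^ x * L))) (-(q * (r ^ x * L * L))) x := by
      simpa [mul_assoc, Pi.neg_def] using (((h1 x).mul_const L).const_mul q).neg
    have := (hv.mul hw).const_mul (m : ℝ)
    simpa [mul_add, mul_assoc] using this
  apply concaveOn_of_hasDerivWithinAt2_nonpos (convex_Ici 0)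
    (f' := fun x => (m : ℝ) * (1 - q * r ^ x) ^ (m - 1) * (-(q * (r ^ x * L))))
    (f'' := fun x => (m : ℝ) * ((((m - 1 : ℕ) : ℝ) * (1 - q * r ^ x) ^ (m - 1 - 1)
        * (-(q * (r ^ x * L)))) * (-(q * (r ^ x * L)))
        + (1 - q * r ^ x) ^ (m - 1) * (-(q * (r ^ x * L * L)))))
  · exact fun x _ => ((hg' x).differentiableAt.comp x differentiableAt_id).continuousAt.continuousWithinAt |>.congr (fun y _ => rfl) rfl
  · exact fun x _ => (hg' x).hasDerivWithinAt
  · exact fun x _ => (hg'' x).hasDerivWithinAt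
  · intro x hx
    rw [interior_Ici] at hx
    set A : ℝ := q * r ^ x with hAdef
    have hrx0 : 0 < r ^ x := Real.rpow_pos_of_pos hr0 x
    have hrx1 : r ^ x ≤ 1 := Real.rpow_le_one hr0.le hr1 hx.le
    have hA0 : 0 < A := mul_pos hq0 hrx0
    have hmA : (m : ℝ) * A ≤ 1 := by
      calc (m : ℝ) * A ≤ (m : ℝ) * q := by
            apply mul_le_mul_of_nonneg_left _ (Nat.cast_nonneg m)
            calc q * r ^ x ≤ q * 1 := by nlinarith
              _ = q := mul_one q
        _ ≤ 1 := hmq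
    set u : ℝ := 1 - q * r ^ x with hudef
    have hu0 : 0 < u := by
      have : q * r ^ x < 1 := by nlinarith
      simp [hudef]; linarith
    have key : ((m - 1 : ℕ) : ℝ) * A * u ^ (m - 1 - 1) ≤ u ^ (m - 1) := by
      rcases Nat.lt_or_ge m 2 with h2m | h2m
      · interval_cases m
        norm_num
      · have hm2 : m - 1 - 1 = m - 2 := by omega
        have hm1 : m - 1 = (m - 2) + 1 := by omega
        rw [hm2, show u ^ (m-1) = u ^ (m-2) * u from by rw [hm1, pow_succ]]
        have hcast : ((m - 1 : ℕ) : ℝ) = (m : ℝ) - 1 := by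
          push_cast [Nat.cast_sub hm]; ring
        have huA : u = 1 - A := by rw [hudef, hAdef]
        have hle : ((m - 1 : ℕ) : ℝ) * A ≤ u := by
          rw [hcast, huA]; nlinarith
        calc ((m - 1 : ℕ) : ℝ) * A * u ^ (m - 2)
            = u ^ (m - 2) * (((m - 1 : ℕ) : ℝ) * A) := by ring
          _ ≤ u ^ (m - 2) * u := by
              apply mul_le_mul_of_nonneg_left hle (by positivity)
    have hexp : (m : ℝ) * ((((m - 1 : ℕ) : ℝ) * u ^ (m - 1 - 1) * (-(A * L))) * (-(A * L))
          + u ^ (m - 1) * (-(A * (L * L))))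
        = ((m : ℝ) * A * (L * L)) * (((m - 1 : ℕ) : ℝ) * A * u ^ (m - 1 - 1) - u ^ (m - 1)) := by
      ring
    have hfinal : (m : ℝ) * ((((m - 1 : ℕ) : ℝ) * u ^ (m - 1 - 1) * (-(A * L))) * (-(A * L))
          + u ^ (m - 1) * (-(A * (L * L)))) ≤ 0 := by
      rw [hexp]
      apply mul_nonpos_of_nonneg_of_nonpos
      · exact mul_nonneg (mul_nonneg (Nat.cast_nonneg m) hA0.le) (mul_self_nonneg L)
      · linarith
    calc (m : ℝ) * ((((m - 1 : ℕ) : ℝ) * (1 - q * r ^ x) ^ (m - 1 - 1)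
          * (-(q * (r ^ x * L)))) * (-(q * (r ^ x * L)))
          + (1 - q * r ^ x) ^ (m - 1) * (-(q * (r ^ x * L * L))))
        = (m : ℝ) * ((((m - 1 : ℕ) : ℝ) * u ^ (m - 1 - 1) * (-(A * L))) * (-(A * L))
          + u ^ (m - 1) * (-(A * (L * L)))) := by
          simp only [hudef, hAdef]; ring
      _ ≤ 0 := hfinal
end

section
/- Let L ≥ 1 and m ≥ 1 be integers, q ∈ (0,1) with m·q ≤ 1, and α ∈ [0,1]. Then h_L := Σ_{ℓ=0}^{L} C(L,ℓ) α^ℓ (1-α)^{L-ℓ} (1 - q(1-q)^ℓ)^m ≤ (1-q)^m + m·L·q²·α. -/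
private lemma aux_pow (m : ℕ) {x y : ℝ} (hx : 0 ≤ x) (hy : 0 ≤ y) (hxy : x + y ≤ 1) :
    (x + y) ^ m ≤ x ^ m + m * y := by
  induction m with
  | zero => simp
  | succ m ih =>
    have hx1 : x ≤ 1 := by linarith
    have h2 : x ^ m ≤ 1 := pow_le_one₀ hx hx1
    have hm0 : (0:ℝ) ≤ (m:ℝ) := by positivity
    calc (x + y) ^ (m+1) = (x + y) ^ m * (x + y) := by ring
      _ ≤ (x ^ m + m * y) * (x + y) := by
          apply mul_le_mul_of_nonneg_right ih (by linarith)
      _ = x ^ (m+1) + x ^ m * y + (m * y) * (x + y) := by ring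
      _ ≤ x ^ (m+1) + 1 * y + (m * y) * 1 := by
          have := mul_nonneg hm0 hy
          nlinarith
      _ = x ^ (m+1) + (↑(m+1)) * y := by push_cast; ring

private lemma ptwise (m ℓ : ℕ) {q : ℝ} (hq : q ∈ Set.Ioo (0:ℝ) 1)
    (hmq : (m : ℝ) * q ≤ 1) :
    (1 - q * (1 - q) ^ ℓ) ^ m ≤ (1 - q) ^ m + m * q ^ 2 * ℓ := by
  obtain ⟨hq0, hq1⟩ := hq
  have h1q : (0:ℝ) ≤ 1 - q := by linarith
  have hpow0 : (0:ℝ) ≤ (1 - q) ^ ℓ := pow_nonneg h1q ℓ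
  have hpow1 : (1 - q) ^ ℓ ≤ 1 := pow_le_one₀ h1q (by linarith)
  have hbase0 : (0:ℝ) ≤ 1 - q * (1 - q) ^ ℓ := by nlinarith
  by_cases hcase : q * ℓ ≤ 1
  · -- Bernoulli: (1-q)^ℓ ≥ 1 - ℓ q
    have hbern : 1 - (ℓ : ℝ) * q ≤ (1 - q) ^ ℓ := by
      simpa [sub_eq_add_neg, mul_comm] using one_add_mul_le_pow (by linarith : (-2:ℝ) ≤ -q) ℓ
    have hle : 1 - q * (1 - q) ^ ℓ ≤ (1 - q) + ℓ * q ^ 2 := by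
      nlinarith [mul_le_mul_of_nonneg_left hbern hq0.le]
    have hsum : (1 - q) + (ℓ : ℝ) * q ^ 2 ≤ 1 := by nlinarith
    calc (1 - q * (1 - q) ^ ℓ) ^ m ≤ ((1 - q) + ℓ * q ^ 2) ^ m :=
          pow_le_pow_left₀ hbase0 hle m
      _ ≤ (1 - q) ^ m + m * (ℓ * q ^ 2) :=
          aux_pow m h1q (by positivity) hsum
      _ = (1 - q) ^ m + m * q ^ 2 * ℓ := by ring
  · push_neg at hcase
    have h1 : (1 - q * (1 - q) ^ ℓ) ^ m ≤ 1 :=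
      pow_le_one₀ hbase0 (by nlinarith)
    have h2 : (1:ℝ) ≤ (1 - q) ^ m + m * q := by
      have := aux_pow m h1q (le_of_lt hq0) (by linarith)
      simpa using this
    have h3 : (m:ℝ) * q ≤ m * q ^ 2 * ℓ := by
      nlinarith [mul_le_mul_of_nonneg_left hcase.le
        (mul_nonneg (Nat.cast_nonneg (α := ℝ) m) hq0.le)]
    linarith

private lemma binom_sum (n : ℕ) (α : ℝ) :
    ∑ ℓ ∈ Finset.range (n + 1),
      (n.choose ℓ : ℝ) * α ^ ℓ * (1 - α) ^ (n - ℓ) = 1 := by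
  have h : ∑ ℓ ∈ Finset.range (n + 1),
      (n.choose ℓ : ℝ) * α ^ ℓ * (1 - α) ^ (n - ℓ) = (α + (1 - α)) ^ n := by
    rw [add_pow]
    exact Finset.sum_congr rfl fun k _ => by ring
  rw [h]
  simp

private lemma binom_mean (n : ℕ) (α : ℝ) :
    ∑ ℓ ∈ Finset.range (n + 1 + 1),
      (ℓ : ℝ) * ((n + 1).choose ℓ : ℝ) * α ^ ℓ * (1 - α) ^ (n + 1 - ℓ)
      = (n + 1) * α := by
  rw [Finset.sum_range_succ']
  simp only [Nat.cast_zero, zero_mul]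
  have key : ∀ i ∈ Finset.range (n + 1),
      ((i+1 : ℕ) : ℝ) * ((n + 1).choose (i+1) : ℝ) * α ^ (i+1) * (1 - α) ^ (n + 1 - (i+1))
      = ((n:ℝ) + 1) * α * ((n.choose i : ℝ) * α ^ i * (1 - α) ^ (n - i)) := by
    intro i _
    have hc : (n+1) * n.choose i = (n + 1).choose (i+1) * (i+1) := by
      simpa using Nat.add_one_mul_choose_eq n i
    have hc' : ((n:ℝ)+1) * (n.choose i : ℝ) = ((n + 1).choose (i+1) : ℝ) * ((i:ℝ)+1) := by
      exact_mod_cast hc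
    have hsub : n + 1 - (i+1) = n - i := by omega
    rw [hsub]
    push_cast
    linear_combination (-(α ^ (i+1) * (1 - α) ^ (n - i))) * hc'

  rw [Finset.sum_congr rfl key, ← Finset.mul_sum, binom_sum n α]
  push_cast
  ring

theorem stmt_2 (L m : ℕ) (q α : ℝ) (hL : 1 ≤ L) (hm : 1 ≤ m)
    (hq : q ∈ Set.Ioo (0:ℝ) 1) (hmq : (m : ℝ) * q ≤ 1) (hα : α ∈ Set.Icc (0:ℝ) 1) :
    ∑ ℓ ∈ Finset.range (L + 1),
        (L.choose ℓ : ℝ) * α ^ ℓ * (1 - α) ^ (L - ℓ) * (1 - q * (1 - q) ^ ℓ) ^ m ≤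
      (1 - q) ^ m + (m : ℝ) * L * q ^ 2 * α := by
  obtain ⟨hα0, hα1⟩ := hα
  have hw : ∀ ℓ, (0:ℝ) ≤ (L.choose ℓ : ℝ) * α ^ ℓ * (1 - α) ^ (L - ℓ) := by
    intro ℓ
    have : (0:ℝ) ≤ 1 - α := by linarith
    positivity
  have step1 : ∑ ℓ ∈ Finset.range (L + 1),
      (L.choose ℓ : ℝ) * α ^ ℓ * (1 - α) ^ (L - ℓ) * (1 - q * (1 - q) ^ ℓ) ^ m ≤
      ∑ ℓ ∈ Finset.range (L + 1),
      (L.choose ℓ : ℝ) * α ^ ℓ * (1 - α) ^ (L - ℓ) * ((1 - q) ^ m + m * q ^ 2 * ℓ) := by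
    apply Finset.sum_le_sum
    intro ℓ _
    exact mul_le_mul_of_nonneg_left (ptwise m ℓ hq hmq) (hw ℓ)
  refine step1.trans ?_
  obtain ⟨n, rfl⟩ : ∃ n, L = n + 1 := ⟨L - 1, by omega⟩
  have expand : ∑ ℓ ∈ Finset.range (n + 1 + 1),
      ((n+1).choose ℓ : ℝ) * α ^ ℓ * (1 - α) ^ (n + 1 - ℓ) * ((1 - q) ^ m + m * q ^ 2 * ℓ)
      = (1 - q) ^ m * (∑ ℓ ∈ Finset.range (n + 1 + 1),
          ((n+1).choose ℓ : ℝ) * α ^ ℓ * (1 - α) ^ (n + 1 - ℓ))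
        + m * q ^ 2 * (∑ ℓ ∈ Finset.range (n + 1 + 1),
          (ℓ : ℝ) * ((n+1).choose ℓ : ℝ) * α ^ ℓ * (1 - α) ^ (n + 1 - ℓ)) := by
    rw [Finset.mul_sum, Finset.mul_sum, ← Finset.sum_add_distrib]
    apply Finset.sum_congr rfl
    intro k _
    ring
  rw [expand, binom_sum (n+1) α, binom_mean n α]
  push_cast
  nlinarith [sq_nonneg q]
end

section
/- Let L ≥ 1 and m ≥ 1 be integers, q ∈ (0,1) with m·q ≤ 1 and q·L ≤ 1, and α ∈ [0,1]. Define h_x := Σ_{ℓ=0}^{x} C(x,ℓ) α^ℓ (1-α)^{x-ℓ} (1 - q(1-q)^ℓ)^m. Then h_L - (1-α)·h_{L-1} ≤ α·(1 - (m·q/2)·(1 - q·L)). -/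
lemma pascal_sum_key (n : ℕ) (a b : ℝ) (f : ℕ → ℝ) :
    ∑ ℓ ∈ Finset.range (n+2), ((n+1).choose ℓ : ℝ) * a^ℓ * b^(n+1-ℓ) * f ℓ
    = b * ∑ ℓ ∈ Finset.range (n+1), (n.choose ℓ : ℝ) * a^ℓ * b^(n-ℓ) * f ℓ
    + a * ∑ ℓ ∈ Finset.range (n+1), (n.choose ℓ : ℝ) * a^ℓ * b^(n-ℓ) * f (ℓ+1) := by
  rw [Finset.sum_range_succ']
  have h1 : ∀ i ∈ Finset.range (n+1),
      ((n+1).choose (i+1) : ℝ) * a^(i+1) * b^(n+1-(i+1)) * f (i+1)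
      = (n.choose (i+1) : ℝ) * a^(i+1) * b^(n+1-(i+1)) * f (i+1)
        + a * ((n.choose i : ℝ) * a^i * b^(n-i) * f (i+1)) := by
    intro i hi
    rw [Nat.choose_succ_succ']
    have h : n + 1 - (i+1) = n - i := by omega
    rw [h]
    push_cast
    ring
  rw [Finset.sum_congr rfl h1, Finset.sum_add_distrib, ← Finset.mul_sum]
  have h2 : (∑ i ∈ Finset.range (n+1), (n.choose (i+1) : ℝ) * a^(i+1) * b^(n+1-(i+1)) * f (i+1))
      + ((n+1).choose 0 : ℝ) * a^0 * b^(n+1-0) * f 0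
      = b * ∑ ℓ ∈ Finset.range (n+1), (n.choose ℓ : ℝ) * a^ℓ * b^(n-ℓ) * f ℓ := by
    have e1 : ((n+1).choose 0 : ℝ) * a^0 * b^(n+1-0) * f 0
        = (n.choose 0 : ℝ) * a^0 * b^(n+1-0) * f 0 := by simp
    rw [e1, ← Finset.sum_range_succ' (fun ℓ => (n.choose ℓ : ℝ) * a^ℓ * b^(n+1-ℓ) * f ℓ) (n+1)]
    rw [Finset.sum_range_succ]
    simp only [Nat.choose_succ_self, Nat.cast_zero, zero_mul]
    rw [add_zero, Finset.mul_sum]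
    apply Finset.sum_congr rfl
    intro ℓ hℓ
    simp only [Finset.mem_range] at hℓ
    have h : n + 1 - ℓ = (n - ℓ) + 1 := by omega
    rw [h, pow_succ]
    ring
  linarith [h2]

lemma pow_one_sub_le (x : ℝ) (m : ℕ) (hx : 0 ≤ x) (h : (m:ℝ) * x ≤ 1) :
    (1 - x)^m ≤ 1 - (m:ℝ) * x / 2 := by
  induction m with
  | zero => simp
  | succ k ih =>
    have hk1 : ((k:ℝ)+1) * x ≤ 1 := by push_cast at h; linarith
    have hkc : (0:ℝ) ≤ (k:ℝ) := Nat.cast_nonneg k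
    have hx1 : x ≤ 1 := by nlinarith
    have hk : (k:ℝ) * x ≤ 1 := by nlinarith
    have ih' := ih hk
    have h1x : (0:ℝ) ≤ 1 - x := by linarith
    have step : (1-x)^(k+1) ≤ (1 - (k:ℝ)*x/2) * (1-x) := by
      rw [pow_succ]
      exact mul_le_mul_of_nonneg_right ih' h1x
    push_cast
    nlinarith [mul_nonneg (mul_nonneg hkc hx) hx]

theorem stmt_3 (L m : ℕ) (q α : ℝ) (hL : 1 ≤ L) (hm : 1 ≤ m)
    (hq : q ∈ Set.Ioo (0:ℝ) 1) (hmq : (m : ℝ) * q ≤ 1) (hqL : q * L ≤ 1)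
    (hα : α ∈ Set.Icc (0:ℝ) 1) :
    (fun x : ℕ => ∑ ℓ ∈ Finset.range (x + 1),
        (x.choose ℓ : ℝ) * α ^ ℓ * (1 - α) ^ (x - ℓ) * (1 - q * (1 - q) ^ ℓ) ^ m) L -
      (1 - α) * (fun x : ℕ => ∑ ℓ ∈ Finset.range (x + 1),
        (x.choose ℓ : ℝ) * α ^ ℓ * (1 - α) ^ (x - ℓ) * (1 - q * (1 - q) ^ ℓ) ^ m) (L - 1) ≤
      α * (1 - ((m : ℝ) * q / 2) * (1 - q * L)) := by
  obtain ⟨n, rfl⟩ : ∃ n, L = n + 1 := ⟨L-1, by omega⟩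
  simp only [Nat.add_sub_cancel]
  obtain ⟨hq0, hq1⟩ := hq
  obtain ⟨hα0, hα1⟩ := hα
  set f : ℕ → ℝ := fun ℓ => (1 - q * (1 - q) ^ ℓ) ^ m with hf
  have key := pascal_sum_key n α (1-α) f
  rw [show n + 1 + 1 = n + 2 from rfl, key]
  have hB : ∀ ℓ ∈ Finset.range (n+1),
      ((n.choose ℓ : ℝ) * α^ℓ * (1-α)^(n-ℓ)) * f (ℓ+1)
      ≤ ((n.choose ℓ : ℝ) * α^ℓ * (1-α)^(n-ℓ)) * (1 - ((m : ℝ) * q / 2) * (1 - q * (n+1))) := by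
    intro ℓ hℓ
    simp only [Finset.mem_range] at hℓ
    have hcoef : (0:ℝ) ≤ (n.choose ℓ : ℝ) * α^ℓ * (1-α)^(n-ℓ) := by
      apply mul_nonneg (mul_nonneg (Nat.cast_nonneg _) (pow_nonneg hα0 _)) (pow_nonneg (by linarith) _)
    apply mul_le_mul_of_nonneg_left _ hcoef
    have h1q0 : (0:ℝ) ≤ 1 - q := by linarith
    have hxpos : (0:ℝ) ≤ q * (1-q)^(ℓ+1) := mul_nonneg (le_of_lt hq0) (pow_nonneg h1q0 _)
    have hple : (1-q)^(ℓ+1) ≤ 1 := pow_le_one₀ h1q0 (by linarith)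
    have hmx : (m:ℝ) * (q * (1-q)^(ℓ+1)) ≤ 1 := by
      have : (m:ℝ) * (q * (1-q)^(ℓ+1)) ≤ (m:ℝ) * q := by
        apply mul_le_mul_of_nonneg_left _ (Nat.cast_nonneg m)
        nlinarith
      linarith
    have h1 := pow_one_sub_le (q * (1-q)^(ℓ+1)) m hxpos hmx
    have hbern : 1 - q * (n+1) ≤ (1-q)^(n+1) := by
      have h := one_add_mul_le_pow (a := -q) (by linarith) (n+1)
      have e : (1 + -q) = (1 - q) := by ring
      rw [e] at h
      push_cast at h ⊢
      linarith
    have hmono : (1-q)^(n+1) ≤ (1-q)^(ℓ+1) :=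
      pow_le_pow_of_le_one h1q0 (by linarith) (by omega)
    have hm0 : (0:ℝ) ≤ (m:ℝ) * q := mul_nonneg (Nat.cast_nonneg m) (le_of_lt hq0)
    simp only [hf]
    push_cast at h1 ⊢
    nlinarith [h1]
  have hS : ∀ S2, S2 ≤ (1 - ((m : ℝ) * q / 2) * (1 - q * (n+1))) →
      (1-α) * (∑ ℓ ∈ Finset.range (n+1), (n.choose ℓ : ℝ) * α^ℓ * (1-α)^(n-ℓ) * f ℓ)
      + α * S2
      - (1-α) * (∑ ℓ ∈ Finset.range (n+1), (n.choose ℓ : ℝ) * α^ℓ * (1-α)^(n-ℓ) * f ℓ)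
      ≤ α * (1 - ((m : ℝ) * q / 2) * (1 - q * (n+1))) := by
    intro S2 hS2
    have := mul_le_mul_of_nonneg_left hS2 hα0
    linarith
  have hsum1 : ∑ ℓ ∈ Finset.range (n+1), (n.choose ℓ : ℝ) * α^ℓ * (1-α)^(n-ℓ) = 1 := by
    have h := add_pow α (1-α) n
    simp only [add_sub_cancel, one_pow] at h
    have h2 : ∑ ℓ ∈ Finset.range (n+1), (n.choose ℓ : ℝ) * α^ℓ * (1-α)^(n-ℓ)
        = ∑ ℓ ∈ Finset.range (n+1), α^ℓ * (1-α)^(n-ℓ) * (n.choose ℓ : ℝ) :=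
      Finset.sum_congr rfl (fun ℓ _ => by ring)
    rw [h2]
    exact h.symm
  have hS2 : (∑ ℓ ∈ Finset.range (n+1), (n.choose ℓ : ℝ) * α^ℓ * (1-α)^(n-ℓ) * f (ℓ+1))
      ≤ 1 - ((m : ℝ) * q / 2) * (1 - q * (n+1)) := by
    calc (∑ ℓ ∈ Finset.range (n+1), (n.choose ℓ : ℝ) * α^ℓ * (1-α)^(n-ℓ) * f (ℓ+1))
        ≤ ∑ ℓ ∈ Finset.range (n+1), (n.choose ℓ : ℝ) * α^ℓ * (1-α)^(n-ℓ) * (1 - ((m : ℝ) * q / 2) * (1 - q * (n+1))) := Finset.sum_le_sum hB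
      _ = (∑ ℓ ∈ Finset.range (n+1), (n.choose ℓ : ℝ) * α^ℓ * (1-α)^(n-ℓ)) * (1 - ((m : ℝ) * q / 2) * (1 - q * (n+1))) := by rw [← Finset.sum_mul]
      _ = 1 - ((m : ℝ) * q / 2) * (1 - q * (n+1)) := by rw [hsum1, one_mul]
  have final := hS _ hS2
  push_cast
  push_cast at final
  linarith
end
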